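/- arXiv:2208.12947 — 4 statements merged into one kernel-verified Lean document; each statement's English description precedes it below -/
import Mathlib

section
/- For k ≥ 2 and q > 0, if (m_0,...,m_{j-1}, 0, m_{j+1},...,m_k) and (m_0,...,m_{j-2}, m_{j-1}+m_{j+1}, m_{j+2},...,m_k) are both paths for q with 1 ≤ j ≤ k-1, then c(q, (m_0,...,m_{j-1}, 0, m_{j+1},...,m_k)) = c(q, (m_0,...,m_{j-2}, m_{j-1}+m_{j+1}, m_{j+2},...,m_k)). -/
noncomputable def cfRev (q : ℝ) : List ℤ → ℝ
  | [] => 0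
  | [a] => (a : ℝ)
  | a :: b :: rest => (a : ℝ) + 1 / (q * cfRev q (b :: rest))

/-- `cf q [m₀, …, m_k]` is the continued fraction `m_k + 1/(q m_{k-1} + q/( … + q/(q m₀)))`. -/
noncomputable def cf (q : ℝ) (l : List ℤ) : ℝ := cfRev q l.reverse

/-- `l` is a path for `q`: all denominators nonzero, i.e. every proper nonempty prefix
has nonzero continued-fraction value. -/
def IsPath (q : ℝ) (l : List ℤ) : Prop :=
  l ≠ [] ∧ ∀ t : List ℤ, t ≠ [] → t <+: l → t.length < l.length → cf q t ≠ 0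

/-- all entries except possibly the last are nonzero -/
def IsProper (l : List ℤ) : Prop := ∀ i, i + 1 < l.length → l.getD i 0 ≠ 0

def IsLoop (q : ℝ) (l : List ℤ) : Prop := IsPath q l ∧ cf q l = 0

/-- the weight `q^{k/2} ∏_{j<k} |c(q, m_j)|`. -/
noncomputable def weight (q : ℝ) (l : List ℤ) : ℝ :=
  Real.sqrt (q ^ (l.length - 1)) * ∏ j ∈ Finset.range (l.length - 1), |cf q (l.take (j + 1))|

/-- composition of paths -/
def comp (m n : List ℤ) : List ℤ := m.dropLast ++ (m.getLastD 0 + n.headD 0) :: n.tail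

/-- one step of zero-skipping -/
def SkipStep (l l' : List ℤ) : Prop :=
  ∃ (u v : List ℤ) (x y : ℤ), l = u ++ x :: 0 :: y :: v ∧ l' = u ++ (x + y) :: v

/-- the weight `w_q` is unique -/
def WeightUnique (q : ℝ) : Prop :=
  ∀ m n : List ℤ, IsPath q m → IsProper m → IsPath q n → IsProper n →
    cf q m = cf q n → weight q m = weight q n

/-!
A zero entry of a continued fraction cancels the two `q`'s around it:
`y + 1/(q·(0 + 1/(q·D))) = y + D`, so the block `x, 0, y` may be replaced by the single
entry `x + y`. The entries after the block only see the value of the tail below them, so the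
whole continued fraction is unchanged. The prefix hypothesis of `IsPath` gives `D ≠ 0`.
-/

lemma cfRev_cons (q : ℝ) (a : ℤ) {s : List ℤ} (hs : s ≠ []) :
    cfRev q (a :: s) = (a : ℝ) + 1 / (q * cfRev q s) := by
  cases s with
  | nil => exact absurd rfl hs
  | cons b t => rfl

lemma cfRev_add_cons (q : ℝ) (a b : ℤ) (w : List ℤ) :
    cfRev q ((a + b) :: w) = b + cfRev q (a :: w) := by
  cases w <;> simp only [cfRev] <;> push_cast <;> ring

lemma cfRev_cons_zero_cons (q : ℝ) (hq : q ≠ 0) (y : ℤ) {s : List ℤ} (hs : s ≠ [])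
    (hs0 : cfRev q s ≠ 0) :
    cfRev q (y :: 0 :: s) = y + cfRev q s := by
  rw [cfRev_cons q y (List.cons_ne_nil _ _), cfRev_cons q 0 hs]
  field_simp
  ring

lemma cfRev_append_congr (q : ℝ) (p : List ℤ) {s t : List ℤ} (hs : s ≠ []) (ht : t ≠ [])
    (hst : cfRev q s = cfRev q t) :
    cfRev q (p ++ s) = cfRev q (p ++ t) := by
  induction p with
  | nil => exact hst
  | cons a p ih =>
    rw [List.cons_append, List.cons_append, cfRev_cons q a (by simp [hs]),
      cfRev_cons q a (by simp [ht]), ih]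

theorem stmt1_general (q : ℝ) (hq : 0 < q) (u v : List ℤ) (x y : ℤ)
    (h1 : IsPath q (u ++ x :: 0 :: y :: v)) :
    cf q (u ++ x :: 0 :: y :: v) = cf q (u ++ (x + y) :: v) := by
  have hx : cfRev q (x :: u.reverse) ≠ 0 := by
    have := h1.2 (u ++ [x]) (by simp) ⟨0 :: y :: v, by simp⟩ (by simp)
    rwa [cf, List.reverse_append, List.reverse_singleton, List.singleton_append] at this
  have hskip : cfRev q (y :: 0 :: x :: u.reverse) = cfRev q ((x + y) :: u.reverse) := by
    rw [cfRev_cons_zero_cons q hq.ne' y (List.cons_ne_nil _ _) hx, cfRev_add_cons]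
  simpa [cf] using cfRev_append_congr q v.reverse (by simp) (by simp) hskip

theorem stmt1 (q : ℝ) (hq : 0 < q) (u v : List ℤ) (x y : ℤ)
    (h1 : IsPath q (u ++ x :: 0 :: y :: v)) (h2 : IsPath q (u ++ (x + y) :: v)) :
    cf q (u ++ x :: 0 :: y :: v) = cf q (u ++ (x + y) :: v) :=
  stmt1_general q hq u v x y h1
end

section
/- Let q > 0 and let m = (m_0,...,m_k) be a loop for q (i.e., a path with c(q,m) = 0) and let n = (n_0,...,n_ℓ) be a path for q. Then the composition mn = (m_0,...,m_{k-1}, m_k + n_0, n_1,...,n_ℓ) is a path for q, and for each j with 0 ≤ j ≤ ℓ, c(q, (m_0,...,m_k+n_0,...,n_j)) = c(q, n_j), where n_j = (n_0,...,n_j). In particular c(q, mn) = c(q, n). -/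
/-!
The value `c(q, t ++ [x])` is `x + 1/(q c(q, t))`, so it depends on `t` only through `c(q, t)`
and is additive in the last entry. If `m = d ++ [a]` is a loop, then `c(q, d ++ [a + b]) = b`,
and hence `d ++ (a + b) :: s` has the same value as `b :: s` for every `s`. Applied to the
prefixes of `n = b :: s`, this shows that the prefixes of `mn` that are longer than `d` take the
values of the prefixes of `n`, while the shorter ones are prefixes of `m`; so `mn` is a path.
-/

section ContinuedFraction

variable (q : ℝ)

lemma cf_singleton (a : ℤ) : cf q [a] = a := rfl

lemma cf_append_singleton {t : List ℤ} (ht : t ≠ []) (a : ℤ) :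
    cf q (t ++ [a]) = a + 1 / (q * cf q t) := by
  obtain ⟨b, rest, hb⟩ := List.exists_cons_of_ne_nil (List.reverse_ne_nil_iff.mpr ht)
  simp only [cf, List.reverse_append, List.reverse_singleton, List.singleton_append, hb]
  rfl

lemma cf_append_singleton_add (t : List ℤ) (a b : ℤ) :
    cf q (t ++ [a + b]) = cf q (t ++ [a]) + b := by
  rcases eq_or_ne t [] with rfl | ht
  · simp only [List.nil_append, cf_singleton, Int.cast_add]
  · rw [cf_append_singleton q ht, cf_append_singleton q ht]
    push_cast
    ring

lemma cf_append_congr {t t' : List ℤ} (ht : t ≠ []) (ht' : t' ≠ []) (h : cf q t = cf q t')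
    (s : List ℤ) : cf q (t ++ s) = cf q (t' ++ s) := by
  induction s using List.reverseRecOn with
  | nil => simpa using h
  | append_singleton s x ih =>
    rw [← List.append_assoc, ← List.append_assoc,
      cf_append_singleton q (List.append_ne_nil_of_left_ne_nil ht s),
      cf_append_singleton q (List.append_ne_nil_of_left_ne_nil ht' s), ih]

lemma cf_append_cons_add_of_cf_eq_zero {d : List ℤ} {a : ℤ} (hloop : cf q (d ++ [a]) = 0)
    (b : ℤ) (s : List ℤ) : cf q (d ++ (a + b) :: s) = cf q (b :: s) := by
  have hlast : cf q (d ++ [a + b]) = cf q [b] := by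
    rw [cf_append_singleton_add, hloop, cf_singleton, zero_add]
  simpa using cf_append_congr q (by simp) (by simp) hlast s

end ContinuedFraction

lemma take_append_cons_length_add_one {α : Type*} (d : List α) (x : α) (s : List α) (j : ℕ) :
    (d ++ x :: s).take (d.length + 1 + j) = d ++ x :: s.take j := by
  rw [Nat.add_assoc, Nat.add_comm 1, List.take_length_add_append, List.take_succ_cons]

lemma comp_append_singleton_cons (d : List ℤ) (a b : ℤ) (s : List ℤ) :
    comp (d ++ [a]) (b :: s) = d ++ (a + b) :: s := by
  simp [comp]

lemma cf_take_append_cons_add {q : ℝ} {d : List ℤ} {a : ℤ} (hloop : cf q (d ++ [a]) = 0)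
    (b : ℤ) (s : List ℤ) (j : ℕ) :
    cf q ((d ++ (a + b) :: s).take (d.length + 1 + j)) = cf q ((b :: s).take (j + 1)) := by
  rw [take_append_cons_length_add_one, List.take_succ_cons,
    cf_append_cons_add_of_cf_eq_zero q hloop]

lemma isPath_append_cons_add {q : ℝ} {d : List ℤ} {a b : ℤ} {s : List ℤ}
    (hm : IsLoop q (d ++ [a])) (hn : IsPath q (b :: s)) : IsPath q (d ++ (a + b) :: s) := by
  obtain ⟨⟨-, hm_prefix⟩, hm_zero⟩ := hm
  refine ⟨by simp, fun t ht_ne ht_prefix ht_len => ?_⟩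
  simp only [List.length_append, List.length_cons] at ht_len
  rcases le_or_gt t.length d.length with hle | hlt
  · have htd : t <+: d := List.prefix_of_prefix_length_le ht_prefix (List.prefix_append d _) hle
    exact hm_prefix t ht_ne (htd.trans (List.prefix_append d [a])) (by simp only [List.length_append, List.length_singleton]; omega)
  · obtain ⟨j, hj⟩ : ∃ j, t.length = d.length + 1 + j := ⟨t.length - d.length - 1, by omega⟩
    rw [List.prefix_iff_eq_take.mp ht_prefix, hj, cf_take_append_cons_add hm_zero]
    exact hn.2 _ (by simp) (List.take_prefix _ _) (by simp only [List.length_take, List.length_cons]; omega)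

theorem stmt2_general (q : ℝ) (m n : List ℤ) (hm : IsLoop q m) (hn : IsPath q n) :
    IsPath q (comp m n) ∧
    (∀ j < n.length, cf q ((comp m n).take (m.length + j)) = cf q (n.take (j + 1))) ∧
    cf q (comp m n) = cf q n := by
  obtain ⟨b, s, rfl⟩ := List.exists_cons_of_ne_nil hn.1
  obtain ⟨d, a, rfl⟩ := (List.eq_nil_or_concat m).resolve_left hm.1.1
  simp only [List.concat_eq_append, comp_append_singleton_cons, List.length_append,
    List.length_singleton] at hm ⊢
  exact ⟨isPath_append_cons_add hm hn, fun j _ => cf_take_append_cons_add hm.2 b s j,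
    cf_append_cons_add_of_cf_eq_zero q hm.2 b s⟩

theorem stmt2 (q : ℝ) (hq : 0 < q) (m n : List ℤ) (hm : IsLoop q m) (hn : IsPath q n) :
    IsPath q (comp m n) ∧
    (∀ j < n.length, cf q ((comp m n).take (m.length + j)) = cf q (n.take (j + 1))) ∧
    cf q (comp m n) = cf q n :=
  stmt2_general q m n hm hn
end

section
/- If m = (m_0,...,m_k) and n = (n_0,...,n_ℓ) are proper paths (integer vectors with all entries except possibly the last nonzero) and the rational functions R(x,m) and R(x,n) are equal as rational functions, then m = n. -/
/-!
Work with the valuation at infinity `v` on `ℚ(x)`. For a proper path with `k ≥ 1`,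
`R(x, m) = m_k + 1/(x R(x, m'))` where `m' = (m_0, …, m_{k-1})` has nonzero entries, so
`v (R(x, m')) = 1` and the tail `1/(x R(x, m'))` is nonzero with `v < 1`. Hence `m_k` is read off
as the value of `R(x, m)` at infinity, the tail vanishes exactly when `k = 0`, and inverting the
tail recovers `R(x, m')`; induction on the length finishes.
-/

/-- the rational function `R(x, (m₀,…,m_k)) = m_k + 1/(x m_{k-1} + x/( … + x/(x m₀)))`. -/
noncomputable def R (m : ℕ → ℤ) : ℕ → RatFunc ℚ
  | 0 => RatFunc.C ((m 0 : ℚ))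
  | l + 1 => RatFunc.C ((m (l + 1) : ℚ)) + 1 / (RatFunc.X * R m l)

open RatFunc WithZero

namespace RatFunc

variable {K : Type*} [Field K] [DecidableEq (RatFunc K)]

lemma inftyValuation_one_div_X_mul_lt_one {f : RatFunc K} (hf : inftyValuation K f = 1) :
    inftyValuation K (1 / (X * f)) < 1 := by
  rw [one_div, map_inv₀, map_mul, inftyValuation.X, hf, mul_one, ← exp_neg, ← exp_zero, exp_lt_exp]
  norm_num

lemma eq_of_C_add_eq_C_add {a b : K} {s t : RatFunc K} (hs : inftyValuation K s < 1)
    (ht : inftyValuation K t < 1) (h : C a + s = C b + t) : a = b := by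
  by_contra hab
  have hC : C (a - b) = t - s := by
    rw [map_sub]
    linear_combination h
  have hlt : inftyValuation K (C (a - b)) < 1 :=
    hC ▸ ((inftyValuation K).map_sub t s).trans_lt (max_lt ht hs)
  rw [inftyValuation.C _ (sub_ne_zero.mpr hab)] at hlt
  exact hlt.false

end RatFunc

variable {m n : ℕ → ℤ}

lemma R_succ (k : ℕ) : R m (k + 1) = C ((m (k + 1) : ℚ)) + 1 / (X * R m k) := rfl

lemma inftyValuation_R [DecidableEq (RatFunc ℚ)] :
    ∀ {k : ℕ}, (∀ j < k + 1, m j ≠ 0) → inftyValuation ℚ (R m k) = 1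
  | 0, hm => inftyValuation.C _ (Int.cast_ne_zero.mpr (hm 0 zero_lt_one))
  | k + 1, hm => by
    have hC : inftyValuation ℚ (C ((m (k + 1) : ℚ))) = 1 :=
      inftyValuation.C _ (Int.cast_ne_zero.mpr (hm (k + 1) k.succ.lt_succ_self))
    have htail := inftyValuation_one_div_X_mul_lt_one
      (inftyValuation_R fun j hj => hm j (hj.trans k.succ.lt_succ_self))
    rw [R_succ, Valuation.map_add_eq_of_lt_left _ (hC ▸ htail), hC]

lemma R_zero_ne_R_succ {l : ℕ} (hn : ∀ j < l + 1, n j ≠ 0) : R m 0 ≠ R n (l + 1) := by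
  classical
  intro h
  have hv := inftyValuation_R hn
  have htail := inftyValuation_one_div_X_mul_lt_one hv
  rw [R_succ, ← add_zero (R m 0)] at h
  have hhead := eq_of_C_add_eq_C_add (by simp) htail h
  rw [R, hhead, add_right_inj] at h
  have hR : R n l ≠ 0 := (inftyValuation ℚ).ne_zero_iff.mp (hv ▸ one_ne_zero)
  exact one_div_ne_zero (mul_ne_zero X_ne_zero hR) h.symm

lemma eq_and_R_eq_of_R_succ_eq {k l : ℕ} (hm : ∀ j < k + 1, m j ≠ 0)
    (hn : ∀ j < l + 1, n j ≠ 0) (h : R m (k + 1) = R n (l + 1)) :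
    m (k + 1) = n (l + 1) ∧ R m k = R n l := by
  classical
  rw [R_succ, R_succ] at h
  have hhead := eq_of_C_add_eq_C_add (inftyValuation_one_div_X_mul_lt_one (inftyValuation_R hm))
    (inftyValuation_one_div_X_mul_lt_one (inftyValuation_R hn)) h
  rw [hhead, add_right_inj, one_div, one_div, inv_inj] at h
  exact ⟨mod_cast hhead, mul_left_cancel₀ X_ne_zero h⟩

theorem stmt13 (m n : ℕ → ℤ) (k l : ℕ)
    (hm : ∀ j < k, m j ≠ 0) (hn : ∀ j < l, n j ≠ 0)
    (h : R m k = R n l) : k = l ∧ ∀ j ≤ k, m j = n j := by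
  induction k generalizing l with
  | zero =>
    cases l with
    | zero =>
      refine ⟨rfl, fun j hj => ?_⟩
      obtain rfl := Nat.le_zero.mp hj
      exact Int.cast_injective (α := ℚ) (C.injective h)
    | succ l => exact absurd h (R_zero_ne_R_succ hn)
  | succ k ih =>
    cases l with
    | zero => exact absurd h.symm (R_zero_ne_R_succ hm)
    | succ l =>
      obtain ⟨hlast, hR⟩ := eq_and_R_eq_of_R_succ_eq hm hn h
      obtain ⟨rfl, hinit⟩ :=
        ih l (fun j hj => hm j (by omega)) (fun j hj => hn j (by omega)) hR
      refine ⟨rfl, fun j hj => ?_⟩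
      rcases Nat.lt_or_eq_of_le hj with hj | rfl
      · exact hinit j (by omega)
      · exact hlast
end

section
/- If q > 0 and there exists a loop for q of odd length, then 1/q is an algebraic integer. -/
/-!
Evaluated at `1/q`, the continuant-type polynomial `cfPoly L` is the product of the continued
fractions `cfRev q s` over the nonempty suffixes `s` of `L`, as long as the proper ones are nonzero:
multiplying `cfRev q (a :: s) = a + 1/(q · cfRev q s)` by `cfRev q s` telescopes. For a loop `m` the
factor `cfRev q m.reverse = cf q m` vanishes, and when `m` has even length `2n` the polynomial
`cfPoly m.reverse` is monic of degree `n`, so `1/q` is a root of a monic integer polynomial.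
-/

open Polynomial

noncomputable def cfPoly : List ℤ → ℤ[X]
  | [] => 1
  | [a] => C a
  | a :: b :: rest => C a * cfPoly (b :: rest) + X * cfPoly rest

theorem natDegree_cfPoly_le (L : List ℤ) : (cfPoly L).natDegree ≤ L.length / 2 := by
  induction L using cfPoly.induct with
  | case1 => simp [cfPoly]
  | case2 a => simp [cfPoly]
  | case3 a b rest ih₁ ih₂ =>
    simp only [cfPoly, List.length_cons] at ih₁ ⊢
    refine natDegree_add_le_of_degree_le ?_ ?_
    · exact (natDegree_C_mul_le _ _).trans (ih₁.trans (by omega))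
    · have hX : (X * cfPoly rest).natDegree ≤ 1 + (cfPoly rest).natDegree :=
        natDegree_mul_le.trans (by gcongr; exact natDegree_X_le)
      omega

theorem coeff_cfPoly_of_even (L : List ℤ) (hL : Even L.length) :
    (cfPoly L).coeff (L.length / 2) = 1 := by
  induction L using cfPoly.induct with
  | case1 => simp [cfPoly]
  | case2 a => simp at hL
  | case3 a b rest _ ih =>
    have hrest : Even rest.length := by simpa [Nat.even_add_one] using hL
    have hhalf : (a :: b :: rest).length / 2 = rest.length / 2 + 1 := by simp; omega
    have hlow : (C a * cfPoly (b :: rest)).natDegree < rest.length / 2 + 1 := by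
      have hle := (natDegree_C_mul_le a _).trans (natDegree_cfPoly_le (b :: rest))
      obtain ⟨k, hk⟩ := hrest
      simp only [List.length_cons, hk] at hle ⊢
      omega
    rw [hhalf, cfPoly, coeff_add, coeff_eq_zero_of_natDegree_lt hlow, coeff_X_mul, ih hrest,
      zero_add]

theorem monic_cfPoly (L : List ℤ) (hL : Even L.length) : (cfPoly L).Monic :=
  monic_of_natDegree_le_of_coeff_eq_one _ (natDegree_cfPoly_le L) (coeff_cfPoly_of_even L hL)

theorem aeval_cfPoly_cons (q : ℝ) (a : ℤ) (L : List ℤ)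
    (hL : ∀ s, s ≠ [] → s <:+ L → cfRev q s ≠ 0) :
    aeval (1 / q) (cfPoly (a :: L)) = cfRev q (a :: L) * aeval (1 / q) (cfPoly L) := by
  induction L generalizing a with
  | nil => simp [cfPoly, cfRev]
  | cons b rest ih =>
    have hb : cfRev q (b :: rest) ≠ 0 := hL _ (List.cons_ne_nil _ _) (List.suffix_refl _)
    have ih' := ih b fun s hs hsuf => hL s hs (hsuf.trans (List.suffix_cons _ _))
    rw [cfPoly, map_add, map_mul, map_mul, ih', cfRev]
    simp only [aeval_X, eq_intCast, map_intCast]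
    field_simp

theorem IsPath.cfRev_ne_zero {q : ℝ} {l s : List ℤ} (hl : IsPath q l) (hs : s ≠ [])
    (hsuf : s <:+ l.reverse) (hlen : s.length < l.length) : cfRev q s ≠ 0 := by
  have hpre : s.reverse <+: l := by simpa using List.reverse_prefix.mpr hsuf
  simpa [cf] using hl.2 s.reverse (by simpa using hs) hpre (by simpa using hlen)

theorem IsLoop.aeval_cfPoly_reverse_eq_zero {q : ℝ} {l : List ℤ} (hl : IsLoop q l) :
    aeval (1 / q) (cfPoly l.reverse) = 0 := by
  obtain ⟨a, L, hrev⟩ := List.exists_cons_of_ne_nil (List.reverse_ne_nil_iff.mpr hl.1.1)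
  have hcf : cfRev q (a :: L) = 0 := hrev ▸ hl.2
  have hlen : l.length = L.length + 1 := by rw [← List.length_reverse, hrev, List.length_cons]
  rw [hrev, aeval_cfPoly_cons q a L, hcf, zero_mul]
  intro s hs hsuf
  exact hl.1.cfRev_ne_zero hs (hrev ▸ hsuf.trans (List.suffix_cons a L))
    (hlen ▸ Nat.lt_succ_of_le hsuf.length_le)

theorem stmt16_general (q : ℝ)
    (h : ∃ m : List ℤ, IsLoop q m ∧ Odd (m.length - 1)) :
    IsIntegral ℤ (1 / q) := by
  obtain ⟨l, hl, hodd⟩ := h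
  have hpos : 0 < l.length := List.length_pos_iff.mpr hl.1.1
  have heven : Even l.reverse.length := by
    obtain ⟨k, hk⟩ := hodd
    exact ⟨k + 1, by simp only [List.length_reverse]; omega⟩
  refine ⟨cfPoly l.reverse, monic_cfPoly _ heven, ?_⟩
  rw [← aeval_def]
  exact hl.aeval_cfPoly_reverse_eq_zero

theorem stmt16 (q : ℝ) (hq : 0 < q)
    (h : ∃ m : List ℤ, IsLoop q m ∧ Odd (m.length - 1)) :
    IsIntegral ℤ (1 / q) :=
  stmt16_general q h
end
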